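/- arXiv:1502.02009 — 8 statements merged into one kernel-verified Lean document; each statement's English description precedes it below -/
import Mathlib

section
/- Let g : ℝ^q → ℝ ∪ {+∞} be convex, closed (its sublevel sets are closed), and proper, let ρ > 0, let B ∈ ℝ^{r×q} have full column rank, and let B† be any left inverse of B. Define ĝ : ℝ^r → ℝ ∪ {+∞} by ĝ(s) = ρ⁻¹ g(B† s) if s lies in the image of B, and ĝ(s) = +∞ otherwise. Then ĝ is convex, closed, and proper. -/
open scoped Classical
/-- Convexity for an `ℝ ∪ {+∞}`-valued (i.e. `EReal`-valued, never `⊥`) function. -/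
def ERealConvex {E : Type*} [AddCommGroup E] [Module ℝ E] (g : E → EReal) : Prop :=
  ∀ x y : E, ∀ t : ℝ, 0 ≤ t → t ≤ 1 →
    g (t • x + (1 - t) • y) ≤ (t : EReal) * g x + ((1 - t : ℝ) : EReal) * g y

private lemma mul_ne_bot_aux (t : ℝ) (ht : 0 ≤ t) (a : EReal) (ha : a ≠ ⊥) :
    (t : EReal) * a ≠ ⊥ := by
  induction a with
  | bot => exact absurd rfl ha
  | coe x => norm_cast; exact EReal.coe_ne_bot _
  | top =>
    rcases eq_or_lt_of_le ht with h | h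
    · simp [← h]
    · simp [EReal.coe_mul_top_of_pos h]

/-- Let `g : ℝ^q → ℝ ∪ {+∞}` be convex, closed (all sublevel sets are
closed) and proper, let `ρ > 0`, let `B : ℝ^q → ℝ^r` have full column rank (be injective),
and let `B†` be a left inverse of `B`.  Define `ĝ(s) = ρ⁻¹ g(B† s)` for `s` in the image
of `B` and `ĝ(s) = +∞` otherwise.  Then `ĝ` is convex, closed, and proper (and never
takes the value `-∞`). -/
theorem stmt3 {q r : ℕ} (ρ : ℝ) (hρ : 0 < ρ)
    (g : EuclideanSpace ℝ (Fin q) → EReal)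
    (hgreal : ∀ z, g z ≠ ⊥)
    (hgconv : ERealConvex g)
    (hgclosed : ∀ t : ℝ, IsClosed {z | g z ≤ (t : EReal)})
    (hgproper : ∃ z, g z ≠ ⊤)
    (B : EuclideanSpace ℝ (Fin q) →ₗ[ℝ] EuclideanSpace ℝ (Fin r))
    (hB : Function.Injective B)
    (Bdag : EuclideanSpace ℝ (Fin r) →ₗ[ℝ] EuclideanSpace ℝ (Fin q))
    (hBdag : ∀ z, Bdag (B z) = z) :
    ERealConvex (fun s => if s ∈ Set.range B then ((ρ⁻¹ : ℝ) : EReal) * g (Bdag s) else ⊤) ∧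
    (∀ t : ℝ, IsClosed {s | (if s ∈ Set.range B then ((ρ⁻¹ : ℝ) : EReal) * g (Bdag s) else ⊤)
      ≤ (t : EReal)}) ∧
    (∃ s, (if s ∈ Set.range B then ((ρ⁻¹ : ℝ) : EReal) * g (Bdag s) else ⊤) ≠ ⊤) ∧
    (∀ s, (if s ∈ Set.range B then ((ρ⁻¹ : ℝ) : EReal) * g (Bdag s) else ⊤) ≠ ⊥) := by
  have hρinv : (0:ℝ) < ρ⁻¹ := inv_pos.2 hρ
  set f : EuclideanSpace ℝ (Fin r) → EReal :=
    fun s => if s ∈ Set.range B then ((ρ⁻¹ : ℝ) : EReal) * g (Bdag s) else ⊤ with hf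
  -- never ⊥
  have hfbot : ∀ s, f s ≠ ⊥ := by
    intro s
    simp only [hf]
    split
    · exact mul_ne_bot_aux _ hρinv.le _ (hgreal _)
    · simp
  refine ⟨?_, ?_, ?_, hfbot⟩
  · -- convexity
    intro x y t ht0 ht1
    rcases eq_or_lt_of_le ht0 with h0 | h0
    · simp [← h0]
    rcases eq_or_lt_of_le ht1 with h1 | h1
    · simp [h1]
    have h1' : (0:ℝ) < 1 - t := by linarith
    by_cases hx : x ∈ Set.range B
    · by_cases hy : y ∈ Set.range B
      · obtain ⟨x', rfl⟩ := hx
        obtain ⟨y', rfl⟩ := hy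
        have hmem : t • B x' + (1 - t) • B y' ∈ Set.range B :=
          ⟨t • x' + (1 - t) • y', by simp [map_add, map_smul]⟩
        simp only [hf, if_pos hmem, if_pos (Set.mem_range_self x'),
          if_pos (Set.mem_range_self y')]
        have hcomb : Bdag (t • B x' + (1 - t) • B y') = t • x' + (1 - t) • y' := by
          have : t • B x' + (1 - t) • B y' = B (t • x' + (1 - t) • y') := by
            simp [map_add, map_smul]
          rw [this, hBdag]
        rw [hcomb, hBdag, hBdag]
        -- cases on finiteness of g x', g y'
        by_cases hgx : g x' = ⊤
        · have : (t : EReal) * (((ρ⁻¹ : ℝ) : EReal) * g x') = ⊤ := by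
            rw [hgx, EReal.coe_mul_top_of_pos hρinv, EReal.coe_mul_top_of_pos h0]
          rw [this, EReal.top_add_of_ne_bot
            (mul_ne_bot_aux _ h1'.le _ (mul_ne_bot_aux _ hρinv.le _ (hgreal _)))]
          exact le_top
        by_cases hgy : g y' = ⊤
        · have : ((1 - t : ℝ) : EReal) * (((ρ⁻¹ : ℝ) : EReal) * g y') = ⊤ := by
            rw [hgy, EReal.coe_mul_top_of_pos hρinv, EReal.coe_mul_top_of_pos h1']
          rw [this, EReal.add_top_of_ne_bot
            (mul_ne_bot_aux _ ht0 _ (mul_ne_bot_aux _ hρinv.le _ (hgreal _)))]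
          exact le_top
        obtain ⟨a, ha⟩ : ∃ a : ℝ, g x' = (a : EReal) := by
          lift g x' to ℝ using ⟨hgx, hgreal x'⟩ with a; exact ⟨a, rfl⟩
        obtain ⟨b, hb⟩ : ∃ b : ℝ, g y' = (b : EReal) := by
          lift g y' to ℝ using ⟨hgy, hgreal y'⟩ with b; exact ⟨b, rfl⟩
        have key := hgconv x' y' t ht0 ht1
        rw [ha, hb] at key
        calc ((ρ⁻¹ : ℝ) : EReal) * g (t • x' + (1 - t) • y')
            ≤ ((ρ⁻¹ : ℝ) : EReal) * ((t : EReal) * (a : EReal)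
              + ((1 - t : ℝ) : EReal) * (b : EReal)) :=
              mul_le_mul_of_nonneg_left key (by exact_mod_cast hρinv.le)
          _ = (t : EReal) * (((ρ⁻¹ : ℝ) : EReal) * (a : EReal))
              + ((1 - t : ℝ) : EReal) * (((ρ⁻¹ : ℝ) : EReal) * (b : EReal)) := by
              norm_cast; ring
          _ = _ := by rw [ha, hb]
      · -- y not in range : RHS term is ⊤
        have : ((1 - t : ℝ) : EReal) * f y = ⊤ := by
          simp only [hf, if_neg hy]; exact EReal.coe_mul_top_of_pos h1'
        simp only [hf] at this ⊢
        rw [this, EReal.add_top_of_ne_bot (mul_ne_bot_aux _ ht0 _ (hfbot x))]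
        exact le_top
    · have : (t : EReal) * f x = ⊤ := by
        simp only [hf, if_neg hx]; exact EReal.coe_mul_top_of_pos h0
      simp only [hf] at this ⊢
      rw [this, EReal.top_add_of_ne_bot (mul_ne_bot_aux _ h1'.le _ (hfbot y))]
      exact le_top
  · -- closedness
    intro t
    have hset : {s | f s ≤ (t : EReal)} = B '' {z | g z ≤ ((ρ * t : ℝ) : EReal)} := by
      ext s
      simp only [Set.mem_setOf_eq, Set.mem_image]
      constructor
      · intro hs
        have hmem : s ∈ Set.range B := by
          by_contra h
          simp only [hf, if_neg h] at hs
          simp at hs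
        obtain ⟨z, rfl⟩ := hmem
        refine ⟨z, ?_, rfl⟩
        simp only [hf, if_pos (Set.mem_range_self z), hBdag] at hs
        have := mul_le_mul_of_nonneg_left hs
          (by exact_mod_cast hρ.le : (0:EReal) ≤ (ρ : ℝ))
        rw [← mul_assoc, ← EReal.coe_mul, mul_inv_cancel₀ hρ.ne'] at this
        simpa using this
      · rintro ⟨z, hz, rfl⟩
        simp only [hf, if_pos (Set.mem_range_self z), hBdag]
        have := mul_le_mul_of_nonneg_left hz
          (by exact_mod_cast hρinv.le : (0:EReal) ≤ ((ρ⁻¹ : ℝ) : EReal))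
        calc ((ρ⁻¹ : ℝ) : EReal) * g z ≤ ((ρ⁻¹ : ℝ) : EReal) * ((ρ * t : ℝ) : EReal) := this
          _ = (t : EReal) := by
            rw [← EReal.coe_mul, ← mul_assoc, inv_mul_cancel₀ hρ.ne', one_mul]
    rw [hset]
    exact ((LinearMap.isClosedEmbedding_of_injective
      (LinearMap.ker_eq_bot.2 hB)).isClosedMap) _ (hgclosed (ρ * t))
  · -- properness
    obtain ⟨z, hz⟩ := hgproper
    refine ⟨B z, ?_⟩
    simp only [if_pos (Set.mem_range_self z), hBdag]
    obtain ⟨a, ha⟩ : ∃ a : ℝ, g z = (a : EReal) := by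
      lift g z to ℝ using ⟨hz, hgreal z⟩ with a; exact ⟨a, rfl⟩
    rw [ha, ← EReal.coe_mul]
    exact EReal.coe_ne_top _
end

section
/- Let τ > 0, let P be a symmetric positive definite 2×2 matrix, let λ¹, λ² ≥ 0, and suppose the 4×4 matrix N = [[ÂᵀPÂ − τ²P, ÂᵀPB̂],[B̂ᵀPÂ, B̂ᵀPB̂]] + [Ĉ¹ D̂¹; Ĉ² D̂²]ᵀ · blockdiag(λ¹M¹, λ²M²) · [Ĉ¹ D̂¹; Ĉ² D̂²] is negative semidefinite, where Â, B̂, Ĉ¹, D̂¹, Ĉ², D̂², M¹, M² are 2×2 matrices. Let ξ, ξ⁺, ν ∈ ℝ^{2r} satisfy ξ⁺ = (Â ⊗ I_r) ξ + (B̂ ⊗ I_r) ν, and define w¹ = (Ĉ¹ ⊗ I_r) ξ + (D̂¹ ⊗ I_r) ν and w² = (Ĉ² ⊗ I_r) ξ + (D̂² ⊗ I_r) ν. If (w¹)ᵀ (M¹ ⊗ I_r) w¹ ≥ 0 and (w²)ᵀ (M² ⊗ I_r) w² ≥ 0, then (ξ⁺)ᵀ (P ⊗ I_r) ξ⁺ ≤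 τ² · ξᵀ (P ⊗ I_r) ξ. -/
open scoped Matrix Kronecker


lemma kron_mulVec_apply {r : ℕ} (A : Matrix (Fin 2) (Fin 2) ℝ)
    (x : Fin 2 × Fin r → ℝ) (i : Fin 2) (k : Fin r) :
    ((A ⊗ₖ (1 : Matrix (Fin r) (Fin r) ℝ)) *ᵥ x) (i, k) =
      (A *ᵥ fun j => x (j, k)) i := by
  simp [Matrix.mulVec, dotProduct, Fintype.sum_prod_type,
    Matrix.one_apply, mul_ite, ite_mul, Finset.sum_ite_eq, mul_comm]

lemma kron_quad {r : ℕ} (A : Matrix (Fin 2) (Fin 2) ℝ) (x y : Fin 2 × Fin r → ℝ) :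
    x ⬝ᵥ ((A ⊗ₖ (1 : Matrix (Fin r) (Fin r) ℝ)) *ᵥ y) =
      ∑ k : Fin r, (fun i => x (i, k)) ⬝ᵥ (A *ᵥ fun j => y (j, k)) := by
  rw [dotProduct, Fintype.sum_prod_type, Finset.sum_comm]
  refine Finset.sum_congr rfl fun k _ => Finset.sum_congr rfl fun i _ => ?_
  rw [kron_mulVec_apply]

lemma key (P A B C1 D1 C2 D2 M1 M2 : Matrix (Fin 2) (Fin 2) ℝ)
    (τ lam1 lam2 : ℝ) (x u : Fin 2 → ℝ) :
    Sum.elim x u ⬝ᵥ ((Matrix.fromBlocks (Aᵀ * P * A - τ ^ 2 • P) (Aᵀ * P * B)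
        (Bᵀ * P * A) (Bᵀ * P * B) +
      (Matrix.fromBlocks C1 D1 C2 D2)ᵀ *
        Matrix.fromBlocks (lam1 • M1) 0 0 (lam2 • M2) *
        Matrix.fromBlocks C1 D1 C2 D2) *ᵥ Sum.elim x u)
    = (A *ᵥ x + B *ᵥ u) ⬝ᵥ (P *ᵥ (A *ᵥ x + B *ᵥ u))
      - τ ^ 2 * (x ⬝ᵥ (P *ᵥ x))
      + lam1 * ((C1 *ᵥ x + D1 *ᵥ u) ⬝ᵥ (M1 *ᵥ (C1 *ᵥ x + D1 *ᵥ u)))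
      + lam2 * ((C2 *ᵥ x + D2 *ᵥ u) ⬝ᵥ (M2 *ᵥ (C2 *ᵥ x + D2 *ᵥ u))) := by
  simp only [Matrix.mulVec, dotProduct, Matrix.mul_apply,
    Matrix.fromBlocks, Matrix.transpose_apply, Fin.sum_univ_two,
    Fintype.sum_sum_type, Matrix.of_apply, Matrix.sub_apply, Matrix.add_apply,
    Matrix.smul_apply, smul_eq_mul, Sum.elim_inl, Sum.elim_inr, Pi.add_apply,
    Matrix.zero_apply, Matrix.fromBlocks_apply₁₁, Matrix.fromBlocks_apply₁₂,
    Matrix.fromBlocks_apply₂₁, Matrix.fromBlocks_apply₂₂]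
  ring

/-- the one-step contraction argument in the proof of Theorem 1.
If the 4 × 4 LMI matrix built from the 2 × 2 matrices `Â, B̂, Ĉ¹, D̂¹, Ĉ², D̂², M¹, M²`,
a positive definite `P`, `τ > 0` and `λ¹, λ² ≥ 0` is negative semidefinite, and
`ξ⁺ = (Â ⊗ I_r) ξ + (B̂ ⊗ I_r) ν`, `w¹ = (Ĉ¹ ⊗ I_r) ξ + (D̂¹ ⊗ I_r) ν`,
`w² = (Ĉ² ⊗ I_r) ξ + (D̂² ⊗ I_r) ν` with `(w¹)ᵀ (M¹ ⊗ I_r) w¹ ≥ 0` and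
`(w²)ᵀ (M² ⊗ I_r) w² ≥ 0`, then `(ξ⁺)ᵀ (P ⊗ I_r) ξ⁺ ≤ τ² ξᵀ (P ⊗ I_r) ξ`. -/
theorem stmt7 (r : ℕ) (τ : ℝ) (hτ : 0 < τ)
    (P Ahat Bhat C1 D1 C2 D2 M1 M2 : Matrix (Fin 2) (Fin 2) ℝ)
    (hP : P.PosDef) (lam1 lam2 : ℝ) (hlam1 : 0 ≤ lam1) (hlam2 : 0 ≤ lam2)
    (hLMI : ∀ v : (Fin 2 ⊕ Fin 2) → ℝ,
      v ⬝ᵥ ((Matrix.fromBlocks (Ahatᵀ * P * Ahat - τ ^ 2 • P) (Ahatᵀ * P * Bhat)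
          (Bhatᵀ * P * Ahat) (Bhatᵀ * P * Bhat) +
        (Matrix.fromBlocks C1 D1 C2 D2)ᵀ *
          Matrix.fromBlocks (lam1 • M1) 0 0 (lam2 • M2) *
          Matrix.fromBlocks C1 D1 C2 D2) *ᵥ v) ≤ 0)
    (ξ ξplus ν w1 w2 : Fin 2 × Fin r → ℝ)
    (hξplus : ξplus = (Ahat ⊗ₖ (1 : Matrix (Fin r) (Fin r) ℝ)) *ᵥ ξ +
      (Bhat ⊗ₖ (1 : Matrix (Fin r) (Fin r) ℝ)) *ᵥ ν)
    (hw1 : w1 = (C1 ⊗ₖ (1 : Matrix (Fin r) (Fin r) ℝ)) *ᵥ ξ +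
      (D1 ⊗ₖ (1 : Matrix (Fin r) (Fin r) ℝ)) *ᵥ ν)
    (hw2 : w2 = (C2 ⊗ₖ (1 : Matrix (Fin r) (Fin r) ℝ)) *ᵥ ξ +
      (D2 ⊗ₖ (1 : Matrix (Fin r) (Fin r) ℝ)) *ᵥ ν)
    (h1 : 0 ≤ w1 ⬝ᵥ ((M1 ⊗ₖ (1 : Matrix (Fin r) (Fin r) ℝ)) *ᵥ w1))
    (h2 : 0 ≤ w2 ⬝ᵥ ((M2 ⊗ₖ (1 : Matrix (Fin r) (Fin r) ℝ)) *ᵥ w2)) :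
    ξplus ⬝ᵥ ((P ⊗ₖ (1 : Matrix (Fin r) (Fin r) ℝ)) *ᵥ ξplus) ≤
      τ ^ 2 * (ξ ⬝ᵥ ((P ⊗ₖ (1 : Matrix (Fin r) (Fin r) ℝ)) *ᵥ ξ)) := by
  have hcolp : ∀ k : Fin r, (fun i => ξplus (i, k)) =
      Ahat *ᵥ (fun j => ξ (j, k)) + Bhat *ᵥ (fun j => ν (j, k)) := by
    intro k; funext i
    simp only [hξplus, Pi.add_apply, kron_mulVec_apply]
  have hcol1 : ∀ k : Fin r, (fun i => w1 (i, k)) =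
      C1 *ᵥ (fun j => ξ (j, k)) + D1 *ᵥ (fun j => ν (j, k)) := by
    intro k; funext i
    simp only [hw1, Pi.add_apply, kron_mulVec_apply]
  have hcol2 : ∀ k : Fin r, (fun i => w2 (i, k)) =
      C2 *ᵥ (fun j => ξ (j, k)) + D2 *ᵥ (fun j => ν (j, k)) := by
    intro k; funext i
    simp only [hw2, Pi.add_apply, kron_mulVec_apply]
  have hsum : ξplus ⬝ᵥ ((P ⊗ₖ (1 : Matrix (Fin r) (Fin r) ℝ)) *ᵥ ξplus)
      - τ ^ 2 * (ξ ⬝ᵥ ((P ⊗ₖ (1 : Matrix (Fin r) (Fin r) ℝ)) *ᵥ ξ))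
      + lam1 * (w1 ⬝ᵥ ((M1 ⊗ₖ (1 : Matrix (Fin r) (Fin r) ℝ)) *ᵥ w1))
      + lam2 * (w2 ⬝ᵥ ((M2 ⊗ₖ (1 : Matrix (Fin r) (Fin r) ℝ)) *ᵥ w2)) ≤ 0 := by
    rw [kron_quad, kron_quad, kron_quad, kron_quad, Finset.mul_sum,
      Finset.mul_sum, Finset.mul_sum, ← Finset.sum_sub_distrib,
      ← Finset.sum_add_distrib, ← Finset.sum_add_distrib]
    refine Finset.sum_nonpos fun k _ => ?_
    have := hLMI (Sum.elim (fun i => ξ (i, k)) (fun i => ν (i, k)))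
    rw [key] at this
    rw [hcolp k, hcol1 k, hcol2 k]
    exact this
  linarith [mul_nonneg hlam1 h1, mul_nonneg hlam2 h2]
end

section
/- Fix α ∈ (0,2) and ε ∈ ℝ. Then there exists κ₀ ≥ 1 such that for all κ ≥ κ₀, setting ρ₀ = κ^{ε}, τ = 1 − α/(2 κ^{0.5+|ε|}), λ¹ = α κ^{ε−0.5}, λ² = α, and P = [[1, α−1],[α−1, 1]], the matrix P is positive definite and the 4×4 matrix [[ÂᵀPÂ − τ²P, ÂᵀPB̂],[B̂ᵀPÂ, B̂ᵀPB̂]] + [Ĉ¹ D̂¹; Ĉ² D̂²]ᵀ · blockdiag(λ¹M¹, λ²M²) · [Ĉ¹ D̂¹; Ĉ² D̂²] is negative semidefinite, where Â = [[1, α−1],[0,0]], B̂ = [[α,−1],[0,−1]], Ĉ¹ = [[−1,−1],[0,0]], D̂¹ = [[−1,0],[1,0]], Ĉ² = [[1,α−1],[0,0]], D̂² = [[α,−1],[0,1]], M¹ = [[−2ρ₀⁻², ρ₀⁻¹(κ^{−1/2}+κ^{1/2})],[ρ₀⁻¹(κ^{−1/2}+κ^{1/2}), −2]], and M² = [[0,1],[1,0]].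 -/
open scoped Matrix

/-- Generic LDL-type certificate identity for a symmetric 3×3 matrix. -/
lemma stmt10_ldl (n11 n12 n13 n22 n23 n33 v0 v1 v2 : ℝ) :
    n11*(n11*n22 - n12^2)*(n11*v0^2 + n22*v1^2 + n33*v2^2
        + 2*(n12*v0*v1 + n13*v0*v2 + n23*v1*v2))
      = (n11*n22 - n12^2)*(n11*v0+n12*v1+n13*v2)^2
        + ((n11*n22-n12^2)*v1+(n11*n23-n12*n13)*v2)^2
        + n11*(n11*(n22*n33 - n23^2) - n12*(n12*n33 - n23*n13)
            + n13*(n12*n23 - n22*n13))*v2^2 := by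
  ring

set_option maxHeartbeats 1200000 in
/-- Scalar core of the certificate: the explicit quadratic form is nonpositive. -/
lemma stmt10_quad (a m s t u v0 v1 v2 : ℝ) (ha0 : 0 < a) (ha2 : a < 2)
    (hm0 : 0 < m) (hm8 : m ≤ 1/8) (hms : m ≤ s) (hmt : m ≤ t)
    (hstu : s * t = u) (hsum : m * (s + t) = m^2 + u) (hm2u : m^2 ≤ u)
    (hsmall : u + 10*m ≤ a*(2-a)/4) :
    (2*(a*m/2) - (a*m/2)^2) * (v0^2 + 2*(a-1)*v0*v1 + v1^2)
      - a*(2-a)*(v1+v2)^2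
      - 2*a*(s*(v0+v1+v2)^2 + u*(v0+v1+v2)*v2 + t*v2^2) ≤ 0 := by
  obtain ⟨e, he⟩ : ∃ x : ℝ, x = 2*(a*m/2) - (a*m/2)^2 := ⟨_, rfl⟩
  obtain ⟨g, hg⟩ : ∃ x : ℝ, x = a*(2-a) := ⟨_, rfl⟩
  have hg0 : 0 < g := by rw [hg]; nlinarith
  have hs0 : 0 < s := lt_of_lt_of_le hm0 hms
  have ht0 : 0 < t := lt_of_lt_of_le hm0 hmt
  have hu0 : 0 < u := hstu ▸ mul_pos hs0 ht0
  have ham2m : a*m ≤ 2*m := by nlinarith [mul_nonneg hm0.le (by linarith : (0:ℝ) ≤ 2 - a)]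
  have ham : a * m ≤ 1/4 := by linarith
  have ham0 : 0 < a*m := mul_pos ha0 hm0
  have heub : e ≤ a*m := by rw [he]; nlinarith [sq_nonneg (a*m/2)]
  have helb : a*m/2 ≤ e := by
    rw [he]
    nlinarith [mul_nonneg ham0.le (by linarith : (0:ℝ) ≤ 1 - a*m/2)]
  have he0 : 0 < e := lt_of_lt_of_le (by linarith) helb
  have has0 : 0 < a*s := mul_pos ha0 hs0
  have hat0 : 0 < a*t := mul_pos ha0 ht0
  have hau0 : 0 < a*u := mul_pos ha0 hu0
  obtain ⟨n11, hn11d⟩ : ∃ x : ℝ, x = 2*a*s - e := ⟨_, rfl⟩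
  obtain ⟨n12, hn12d⟩ : ∃ x : ℝ, x = 2*a*s - (a-1)*e := ⟨_, rfl⟩
  obtain ⟨n13, hn13d⟩ : ∃ x : ℝ, x = a*u + 2*a*s := ⟨_, rfl⟩
  obtain ⟨n22, hn22d⟩ : ∃ x : ℝ, x = g + 2*a*s - e := ⟨_, rfl⟩
  obtain ⟨n23, hn23d⟩ : ∃ x : ℝ, x = g + a*u + 2*a*s := ⟨_, rfl⟩
  obtain ⟨n33, hn33d⟩ : ∃ x : ℝ, x = g + 2*a*u + 2*a*t + 2*a*s := ⟨_, rfl⟩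
  have hamas : a*m ≤ a*s := mul_le_mul_of_nonneg_left hms ha0.le
  have hn11 : a*s ≤ n11 := by rw [hn11d]; linarith
  have hn11pos : 0 < n11 := lt_of_lt_of_le has0 hn11
  -- positivity of the second leading minor
  have hD2id : n11*n22 - n12^2 = g*(2*a*s - e*(1+4*s) + e^2) := by
    rw [hn11d, hn12d, hn22d, hg]; ring
  have hD2pos : 0 < n11*n22 - n12^2 := by
    rw [hD2id]
    have h1 : e*(1+4*s) ≤ a*m*(1+4*s) :=
      mul_le_mul_of_nonneg_right heub (by linarith)
    have h4 : m*(4*(a*s)) ≤ (1/8)*(4*(a*s)) :=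
      mul_le_mul_of_nonneg_right hm8 (by linarith)
    have h3 : a*s/2 ≤ 2*a*s - e*(1+4*s) + e^2 := by linarith [h1, h4, hamas, sq_nonneg e]
    exact mul_pos hg0 (lt_of_lt_of_le (by linarith) h3)
  -- nonnegativity of the determinant
  have hW : (0:ℝ) ≤ 4*a^2*u - a^2*u^2 - 8*a*e*u + 2*a*e*u^2
      + e^2*(2*a*s + 2*a*u + 2*a*t + g) - 2*a*e*(s+t) + 2*(1-a)*a*e*u := by
    have hb1 : 2*a*e*(s+t) ≤ 2*a^2*m^2 + 2*a^2*u := by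
      have c1 : e*(s+t) ≤ a*m*(s+t) :=
        mul_le_mul_of_nonneg_right heub (by linarith)
      have c2 : (2*a)*(e*(s+t)) ≤ (2*a)*(a*m*(s+t)) :=
        mul_le_mul_of_nonneg_left c1 (by linarith)
      have c3 : (2*a)*(a*m*(s+t)) = 2*a^2*m^2 + 2*a^2*u := by
        linear_combination (2*a^2)*hsum
      linarith [c2, c3]
    have hb2 : 8*a*e*u ≤ 8*a^2*m*u := by
      have := mul_le_mul_of_nonneg_left heub (show (0:ℝ) ≤ 8*(a*u) by linarith)
      nlinarith [this]
    have hb3 : -(2*a^2*m*u) ≤ 2*(1-a)*a*e*u := by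
      have c0 : (0:ℝ) ≤ a*e*u := by positivity
      have c3 : (a-1)*(a*e*u) ≤ 1*(a*e*u) := mul_le_mul_of_nonneg_right (by linarith) c0
      have c2 : (a*u)*e ≤ (a*u)*(a*m) := mul_le_mul_of_nonneg_left heub (by linarith)
      nlinarith [c3, c2]
    have hb4 : g*(a^2*m^2)/4 ≤ e^2*(2*a*s + 2*a*u + 2*a*t + g) := by
      have h1 : (a*m/2)^2 ≤ e^2 := pow_le_pow_left₀ (by linarith) helb 2
      have hx : (0:ℝ) ≤ 2*a*s + 2*a*u + 2*a*t := by linarith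
      have h2 : e^2*g ≤ e^2*(2*a*s + 2*a*u + 2*a*t + g) :=
        mul_le_mul_of_nonneg_left (by linarith) (sq_nonneg e)
      have h5 := mul_le_mul_of_nonneg_left h1 hg0.le
      linarith [h5, h2]
    have hb5 : (0:ℝ) ≤ 2*a*e*u^2 := by positivity
    have hb6 : a^2*((2 - g/4)*m^2) ≤ a^2*((2 - g/4)*u) := by
      have hgle : g ≤ 1 := by rw [hg]; nlinarith [sq_nonneg (a-1)]
      have : (2 - g/4)*m^2 ≤ (2 - g/4)*u :=
        mul_le_mul_of_nonneg_left hm2u (by linarith)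
      exact mul_le_mul_of_nonneg_left this (sq_nonneg a)
    have hb7 : a^2*u*(u + 10*m) ≤ a^2*u*(g/4) := by
      have hgsm : u + 10*m ≤ g/4 := by rw [hg]; exact hsmall
      have c0 : (0:ℝ) ≤ a^2*u := by positivity
      exact mul_le_mul_of_nonneg_left hgsm c0
    linarith [hb1, hb2, hb3, hb4, hb5, hb6, hb7]
  have hdet : 0 ≤ n11*(n22*n33 - n23^2) - n12*(n12*n33 - n23*n13)
      + n13*(n12*n23 - n22*n13) := by
    have hid : n11*(n22*n33 - n23^2) - n12*(n12*n33 - n23*n13) + n13*(n12*n23 - n22*n13)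
        = g*(4*a^2*u - a^2*u^2 - 8*a*e*u + 2*a*e*u^2
          + e^2*(2*a*s + 2*a*u + 2*a*t + g) - 2*a*e*(s+t) + 2*(1-a)*a*e*u) := by
      rw [hn11d, hn12d, hn13d, hn22d, hn23d, hn33d, hg]
      linear_combination (4*a^2*(a*(2-a) - 2*(2-a)*e)) * hstu
    rw [hid]
    exact mul_nonneg hg0.le hW
  -- assemble
  have hQN : (2*(a*m/2) - (a*m/2)^2) * (v0^2 + 2*(a-1)*v0*v1 + v1^2)
      - a*(2-a)*(v1+v2)^2
      - 2*a*(s*(v0+v1+v2)^2 + u*(v0+v1+v2)*v2 + t*v2^2)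
      = -(n11*v0^2 + n22*v1^2 + n33*v2^2
        + 2*(n12*v0*v1 + n13*v0*v2 + n23*v1*v2)) := by
    rw [hn11d, hn12d, hn13d, hn22d, hn23d, hn33d, hg, he]; ring
  rw [hQN, neg_nonpos]
  have hkey := stmt10_ldl n11 n12 n13 n22 n23 n33 v0 v1 v2
  have hc : 0 < n11*(n11*n22 - n12^2) := mul_pos hn11pos hD2pos
  have h2 : n11*(n11*n22 - n12^2) * 0 ≤ n11*(n11*n22 - n12^2) *
      (n11*v0^2 + n22*v1^2 + n33*v2^2 + 2*(n12*v0*v1 + n13*v0*v2 + n23*v1*v2)) := by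
    rw [mul_zero, hkey]
    exact add_nonneg (add_nonneg (mul_nonneg hD2pos.le (sq_nonneg _)) (sq_nonneg _))
      (mul_nonneg (mul_nonneg hn11pos.le hdet) (sq_nonneg _))
  exact le_of_mul_le_mul_left h2 hc

set_option maxHeartbeats 1200000 in
/-- the certificate used to prove Theorem 2 of the paper.
Fix `α ∈ (0, 2)` and `ε ∈ ℝ`.  Then there is `κ₀ ≥ 1` such that for all `κ ≥ κ₀`,
with `ρ₀ = κ^ε`, `τ = 1 - α / (2 κ^(0.5 + |ε|))`, `λ¹ = α κ^(ε - 0.5)`, `λ² = α` and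
`P = [[1, α-1], [α-1, 1]]`, the matrix `P` is positive definite and the 4 × 4 LMI
matrix of Theorem 1 is negative semidefinite. -/
theorem stmt10 (α ε : ℝ) (hα0 : 0 < α) (hα2 : α < 2) :
    ∃ κ₀ : ℝ, 1 ≤ κ₀ ∧ ∀ κ : ℝ, κ₀ ≤ κ →
      (!![1, α - 1; α - 1, 1] : Matrix (Fin 2) (Fin 2) ℝ).PosDef ∧
      ∀ v : (Fin 2 ⊕ Fin 2) → ℝ,
        v ⬝ᵥ ((Matrix.fromBlocks
            ((!![1, α - 1; 0, 0])ᵀ * !![1, α - 1; α - 1, 1] * !![1, α - 1; 0, 0] -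
              (1 - α / (2 * κ ^ (0.5 + |ε|))) ^ 2 • !![1, α - 1; α - 1, 1])
            ((!![1, α - 1; 0, 0])ᵀ * !![1, α - 1; α - 1, 1] * !![α, -1; 0, -1])
            ((!![α, -1; 0, -1])ᵀ * !![1, α - 1; α - 1, 1] * !![1, α - 1; 0, 0])
            ((!![α, -1; 0, -1])ᵀ * !![1, α - 1; α - 1, 1] * !![α, -1; 0, -1]) +
          (Matrix.fromBlocks !![-1, -1; 0, 0] !![-1, 0; 1, 0]
              !![1, α - 1; 0, 0] !![α, -1; 0, 1])ᵀ *
            Matrix.fromBlocks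
              ((α * κ ^ (ε - 0.5)) •
                !![-2 * ((κ ^ ε : ℝ))⁻¹ ^ 2, (κ ^ ε)⁻¹ * (κ ^ (-(1 / 2) : ℝ) + κ ^ ((1 / 2) : ℝ));
                  (κ ^ ε)⁻¹ * (κ ^ (-(1 / 2) : ℝ) + κ ^ ((1 / 2) : ℝ)), -2]) 0 0
              (α • !![0, 1; 1, 0]) *
            Matrix.fromBlocks !![-1, -1; 0, 0] !![-1, 0; 1, 0]
              !![1, α - 1; 0, 0] !![α, -1; 0, 1]) *ᵥ v) ≤ 0 := by
  have hg0 : 0 < α*(2-α) := by nlinarith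
  refine ⟨64 + (44/(α*(2-α)))^2, by nlinarith [sq_nonneg (44/(α*(2-α)))], fun κ hκ => ?_⟩
  have hκ64 : (64:ℝ) ≤ κ := by nlinarith [sq_nonneg (44/(α*(2-α)))]
  have hκpos : (0:ℝ) < κ := by linarith
  have hκ1 : (1:ℝ) ≤ κ := by linarith
  constructor
  · -- positive definiteness of P
    rw [Matrix.posDef_iff_dotProduct_mulVec]
    constructor
    · ext i j
      fin_cases i <;> fin_cases j <;>
        simp [Matrix.conjTranspose_apply]
    · intro x hx
      have hx' : x 0 ≠ 0 ∨ x 1 ≠ 0 := by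
        by_contra h
        push_neg at h
        exact hx (by ext i; fin_cases i <;> simp [h.1, h.2])
      have hexp : star x ⬝ᵥ (!![1, α - 1; α - 1, 1] *ᵥ x)
          = α/2*(x 0 + x 1)^2 + (2-α)/2*(x 0 - x 1)^2 := by
        simp [dotProduct, Matrix.mulVec, Fin.sum_univ_two]
        ring
      rw [hexp]
      have hAB : (0:ℝ) < (x 0 + x 1)^2 + (x 0 - x 1)^2 := by
        rcases hx' with h0 | h1
        · have : 0 < x 0 ^ 2 := by positivity
          nlinarith [sq_nonneg (x 1)]
        · have : 0 < x 1 ^ 2 := by positivity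
          nlinarith [sq_nonneg (x 0)]
      rcases lt_or_ge 0 ((x 0 + x 1)^2) with hA | hA
      · have h1 : 0 < α/2*(x 0 + x 1)^2 := by positivity
        have h2 : 0 ≤ (2-α)/2*(x 0 - x 1)^2 :=
          mul_nonneg (by linarith) (sq_nonneg _)
        linarith
      · have hAz : (x 0 + x 1)^2 = 0 := le_antisymm hA (sq_nonneg _)
        have hB : 0 < (x 0 - x 1)^2 := by nlinarith
        have h1 : 0 < (2-α)/2*(x 0 - x 1)^2 := by
          apply mul_pos (by linarith) hB
        have h2 : 0 ≤ α/2*(x 0 + x 1)^2 := mul_nonneg (by linarith) (sq_nonneg _)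
        linarith
  · intro v
    -- abbreviations
    obtain ⟨m, hm⟩ : ∃ x : ℝ, x = κ ^ (-(0.5+|ε|)) := ⟨_, rfl⟩
    obtain ⟨s, hs⟩ : ∃ x : ℝ, x = κ ^ (-ε-0.5) := ⟨_, rfl⟩
    obtain ⟨t, ht⟩ : ∃ x : ℝ, x = κ ^ (ε-0.5) := ⟨_, rfl⟩
    obtain ⟨u, hu⟩ : ∃ x : ℝ, x = κ ^ (-1 : ℝ) := ⟨_, rfl⟩
    -- scalar facts
    have hm0 : 0 < m := by rw [hm]; positivity
    have hms : m ≤ s := by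
      rw [hm, hs]
      exact Real.rpow_le_rpow_of_exponent_le hκ1 (by linarith [le_abs_self ε])
    have hmt : m ≤ t := by
      rw [hm, ht]
      exact Real.rpow_le_rpow_of_exponent_le hκ1 (by linarith [neg_abs_le ε])
    have hstu : s * t = u := by
      rw [hs, ht, hu, ← Real.rpow_add hκpos]
      congr 1; ring
    have hsum : m * (s + t) = m^2 + u := by
      rcases abs_cases ε with ⟨h1, _⟩ | ⟨h1, _⟩
      · have hmse : m = s := by rw [hm, hs]; congr 1; rw [h1]; ring
        rw [hmse]; linear_combination hstu
      · have hmte : m = t := by rw [hm, ht]; congr 1; rw [h1]; ring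
        rw [hmte]; linear_combination hstu
    have hm2u : m^2 ≤ u := by
      have hmm : m^2 = κ ^ (-(0.5+|ε|) + -(0.5+|ε|)) := by
        rw [hm, sq, ← Real.rpow_add hκpos]
      rw [hmm, hu]
      refine Real.rpow_le_rpow_of_exponent_le hκ1 ?_
      have := abs_nonneg ε
      norm_num
      linarith
    have hu0 : 0 < u := by rw [hu]; positivity
    have huκ : u = κ⁻¹ := by rw [hu, Real.rpow_neg_one]
    have hgle : α*(2-α) ≤ 1 := by nlinarith [sq_nonneg (α-1)]
    have hu64 : u ≤ 1/64 := by
      rw [huκ, inv_le_comm₀ hκpos (by norm_num)]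
      norm_num
      linarith
    have husmall : u ≤ (α*(2-α)/44)^2 := by
      have h1 : (44/(α*(2-α)))^2 ≤ κ := by nlinarith
      rw [huκ, inv_le_comm₀ hκpos (by positivity)]
      rw [show ((α*(2-α)/44)^2)⁻¹ = (44/(α*(2-α)))^2 by rw [div_pow, div_pow, inv_div]]
      exact h1
    have hm8 : m ≤ 1/8 := by nlinarith [sq_nonneg (m - 1/8)]
    have hmg : m ≤ α*(2-α)/44 := by nlinarith [sq_nonneg (m - α*(2-α)/44), hg0, hm0]
    have hsmall : u + 10*m ≤ α*(2-α)/4 := by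
      nlinarith [mul_nonneg (by linarith : (0:ℝ) ≤ 1 - α*(2-α))
        (by linarith : (0:ℝ) ≤ α*(2-α))]
    -- entry identities
    have hinv : ∀ p : ℝ, (κ^p)⁻¹ = κ^(-p) := fun p => (Real.rpow_neg hκpos.le p).symm
    have hE1 : κ ^ (ε-0.5) * ((κ^ε)⁻¹)^2 = s := by
      rw [hs, hinv, sq, ← Real.rpow_add hκpos, ← Real.rpow_add hκpos]
      congr 1; ring
    have hE2 : κ ^ (ε-0.5) * ((κ^ε)⁻¹ * (κ ^ (-(1/2) : ℝ) + κ ^ ((1/2) : ℝ))) = u + 1 := by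
      rw [hu, hinv]
      have c1 : κ ^ (ε-0.5) * (κ^(-ε) * κ ^ (-(1/2) : ℝ)) = κ ^ (-1 : ℝ) := by
        rw [← Real.rpow_add hκpos, ← Real.rpow_add hκpos]
        congr 1; ring
      have c2 : κ ^ (ε-0.5) * (κ^(-ε) * κ ^ ((1/2) : ℝ)) = 1 := by
        rw [← Real.rpow_add hκpos, ← Real.rpow_add hκpos]
        rw [show ε - 0.5 + (-ε + 1/2) = (0:ℝ) by ring, Real.rpow_zero]
      calc κ ^ (ε-0.5) * ((κ^(-ε)) * (κ ^ (-(1/2) : ℝ) + κ ^ ((1/2) : ℝ)))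
          = κ ^ (ε-0.5) * (κ^(-ε) * κ ^ (-(1/2) : ℝ))
            + κ ^ (ε-0.5) * (κ^(-ε) * κ ^ ((1/2) : ℝ)) := by ring
        _ = κ ^ (-1:ℝ) + 1 := by rw [c1, c2]
    have hM1 : (α * κ ^ (ε - 0.5)) •
        (!![-2 * ((κ ^ ε : ℝ))⁻¹ ^ 2, (κ ^ ε)⁻¹ * (κ ^ (-(1 / 2) : ℝ) + κ ^ ((1 / 2) : ℝ));
          (κ ^ ε)⁻¹ * (κ ^ (-(1 / 2) : ℝ) + κ ^ ((1 / 2) : ℝ)), -2] : Matrix (Fin 2) (Fin 2) ℝ)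
        = !![-2*α*s, α*(u+1); α*(u+1), -2*α*t] := by
      ext i j
      fin_cases i <;> fin_cases j <;>
        simp only [Matrix.smul_apply, Matrix.of_apply, Fin.zero_eta, Fin.mk_one,
          Fin.isValue, Matrix.cons_val', Matrix.cons_val_zero, Matrix.cons_val_one,
          Matrix.head_cons, Matrix.empty_val', Matrix.cons_val_fin_one,
          Matrix.head_fin_const, smul_eq_mul]
      · linear_combination (-2*α) * hE1
      · linear_combination α * hE2
      · linear_combination α * hE2
      · rw [ht]; ring
    have hτ : α / (2 * κ ^ ((0.5:ℝ) + |ε|)) = α * m / 2 := by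
      have hA0 : (0:ℝ) < κ ^ ((0.5:ℝ) + |ε|) := Real.rpow_pos_of_pos hκpos _
      rw [hm, Real.rpow_neg hκpos.le]
      field_simp
    rw [hM1, hτ]
    have hBIG : (Matrix.fromBlocks
            ((!![1, α - 1; 0, 0])ᵀ * !![1, α - 1; α - 1, 1] * !![1, α - 1; 0, 0] -
              (1 - α * m / 2) ^ 2 • !![1, α - 1; α - 1, 1])
            ((!![1, α - 1; 0, 0])ᵀ * !![1, α - 1; α - 1, 1] * !![α, -1; 0, -1])
            ((!![α, -1; 0, -1])ᵀ * !![1, α - 1; α - 1, 1] * !![1, α - 1; 0, 0])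
            ((!![α, -1; 0, -1])ᵀ * !![1, α - 1; α - 1, 1] * !![α, -1; 0, -1]) +
          (Matrix.fromBlocks !![-1, -1; 0, 0] !![-1, 0; 1, 0]
              !![1, α - 1; 0, 0] !![α, -1; 0, 1])ᵀ *
            Matrix.fromBlocks (!![-2*α*s, α*(u+1); α*(u+1), -2*α*t]) 0 0
              (α • !![0, 1; 1, 0]) *
            Matrix.fromBlocks !![-1, -1; 0, 0] !![-1, 0; 1, 0]
              !![1, α - 1; 0, 0] !![α, -1; 0, 1])
        = Matrix.fromBlocks
            !![(2*(α*m/2) - (α*m/2)^2) - 2*α*s,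
               (α-1)*(2*(α*m/2) - (α*m/2)^2) - 2*α*s;
               (α-1)*(2*(α*m/2) - (α*m/2)^2) - 2*α*s,
               (2*(α*m/2) - (α*m/2)^2) - 2*α + α^2 - 2*α*s]
            !![-α*u - 2*α*s, 0; -2*α + α^2 - α*u - 2*α*s, 0]
            !![-α*u - 2*α*s, -2*α + α^2 - α*u - 2*α*s; 0, 0]
            !![-2*α + α^2 - 2*α*u - 2*α*t - 2*α*s, 0; 0, 0] := by
      rw [Matrix.fromBlocks_transpose, Matrix.fromBlocks_multiply, Matrix.fromBlocks_multiply,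
        Matrix.fromBlocks_add]
      refine Matrix.fromBlocks_inj.mpr ⟨?_, ?_, ?_, ?_⟩ <;>
        · ext i j
          fin_cases i <;> fin_cases j <;>
            · simp only [Matrix.mul_apply, Fin.sum_univ_two, Matrix.smul_apply,
                Matrix.add_apply, Matrix.sub_apply, Matrix.zero_apply,
                Matrix.transpose_apply, Matrix.of_apply, Fin.zero_eta, Fin.mk_one,
                Fin.isValue, Matrix.cons_val', Matrix.cons_val_zero,
                Matrix.cons_val_one, Matrix.head_cons, Matrix.empty_val',
                Matrix.cons_val_fin_one, Matrix.head_fin_const, smul_eq_mul]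
              ring
    rw [hBIG]
    refine le_trans (le_of_eq ?_)
      (stmt10_quad α m s t u (v (Sum.inl 0)) (v (Sum.inl 1)) (v (Sum.inr 0))
        hα0 hα2 hm0 hm8 hms hmt hstu hsum hm2u hsmall)
    simp only [dotProduct, Matrix.mulVec, Fintype.sum_sum_type, Fin.sum_univ_two,
      Matrix.fromBlocks_apply₁₁, Matrix.fromBlocks_apply₁₂, Matrix.fromBlocks_apply₂₁,
      Matrix.fromBlocks_apply₂₂, Matrix.of_apply, Fin.zero_eta, Fin.mk_one, Fin.isValue,
      Matrix.cons_val', Matrix.cons_val_zero, Matrix.cons_val_one, Matrix.head_cons,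
      Matrix.head_fin_const, Matrix.empty_val', Matrix.cons_val_fin_one]
    ring
end

section
/- Fix α ∈ (0,2) and ε ≥ 0. Then there exists κ₀ ≥ 1 such that for all κ ≥ κ₀, the symmetric 3×3 matrix M with entries M₁₁ = α κ^{1−2ε} + 4 κ^{3/2−ε}, M₁₂ = α² κ^{1−2ε} − α κ^{1−2ε} + 12 κ^{3/2−ε} − 4α κ^{3/2−ε}, M₁₃ = 4κ + 8 κ^{3/2−ε}, M₂₂ = 8κ² − 4ακ² + α κ^{1−2ε} + 4 κ^{3/2−ε}, M₂₃ = 4κ + 8κ² − 4ακ² + 8 κ^{3/2−ε}, and M₃₃ = 8κ + 8κ² − 4ακ² + 8 κ^{3/2−ε} + 8 κ^{3/2+ε} is positive semidefinite. -/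
open scoped Matrix

set_option maxHeartbeats 1000000

/-- AM–GM style quadratic nonnegativity: if `c ^ 2 ≤ 4 * t * s` then the binary
quadratic form `t * u ^ 2 + c * (u * v) + s * v ^ 2` is nonnegative. -/
lemma quad_aux (t s c u v : ℝ) (ht : 0 < t) (hc : c ^ 2 ≤ 4 * t * s) :
    0 ≤ t * u ^ 2 + c * (u * v) + s * v ^ 2 := by
  nlinarith [sq_nonneg (2 * t * u + c * v), mul_nonneg (by nlinarith : (0:ℝ) ≤ 4 * t * s - c ^ 2) (sq_nonneg v), ht.le, sq_nonneg u]

/-- the key matrix computation in the proof of Theorem 2, case `ε ≥ 0`.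
For fixed `α ∈ (0, 2)` and `ε ≥ 0`, the symmetric `3 × 3` matrix `M` with the listed
entries is positive semidefinite for all sufficiently large `κ`. -/
theorem stmt11 (α ε : ℝ) (hα0 : 0 < α) (hα2 : α < 2) (hε : 0 ≤ ε) :
    ∃ κ₀ : ℝ, 1 ≤ κ₀ ∧ ∀ κ : ℝ, κ₀ ≤ κ →
      ∀ v : Fin 3 → ℝ, 0 ≤ v ⬝ᵥ
        ((!![α * κ ^ (1 - 2 * ε) + 4 * κ ^ (3 / 2 - ε),
            α ^ 2 * κ ^ (1 - 2 * ε) - α * κ ^ (1 - 2 * ε) + 12 * κ ^ (3 / 2 - ε)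
              - 4 * α * κ ^ (3 / 2 - ε),
            4 * κ + 8 * κ ^ (3 / 2 - ε);
          α ^ 2 * κ ^ (1 - 2 * ε) - α * κ ^ (1 - 2 * ε) + 12 * κ ^ (3 / 2 - ε)
              - 4 * α * κ ^ (3 / 2 - ε),
            8 * κ ^ 2 - 4 * α * κ ^ 2 + α * κ ^ (1 - 2 * ε) + 4 * κ ^ (3 / 2 - ε),
            4 * κ + 8 * κ ^ 2 - 4 * α * κ ^ 2 + 8 * κ ^ (3 / 2 - ε);
          4 * κ + 8 * κ ^ (3 / 2 - ε),
            4 * κ + 8 * κ ^ 2 - 4 * α * κ ^ 2 + 8 * κ ^ (3 / 2 - ε),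
            8 * κ + 8 * κ ^ 2 - 4 * α * κ ^ 2 + 8 * κ ^ (3 / 2 - ε) + 8 * κ ^ (3 / 2 + ε)]
          : Matrix (Fin 3) (Fin 3) ℝ) *ᵥ v) := by
  set m : ℝ := min α (2 - α) with hm_def
  have hmα : m ≤ α := min_le_left _ _
  have hm2α : m ≤ 2 - α := min_le_right _ _
  have hm0 : 0 < m := lt_min hα0 (by linarith)
  have hm1 : m ≤ 1 := by
    rcases le_total α 1 with h | h
    · exact le_trans hmα h
    · exact le_trans hm2α (by linarith)
  refine ⟨6000 / m ^ 4, ?_, ?_⟩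
  · rw [le_div_iff₀ (by positivity)]
    nlinarith [pow_le_one₀ hm0.le hm1 (n := 4), pow_pos hm0 4]
  intro κ hκ v
  have hm4κ : 6000 ≤ m ^ 4 * κ := by
    rw [div_le_iff₀ (by positivity)] at hκ
    linarith
  have hκ1 : (1:ℝ) ≤ κ := by nlinarith [pow_le_one₀ hm0.le hm1 (n := 4), pow_pos hm0 4]
  have hk0 : (0:ℝ) < κ := by linarith
  set x : ℝ := v 0 with hx
  set y : ℝ := v 1 with hy
  set z : ℝ := v 2 with hz
  set a : ℝ := κ ^ (1 - 2 * ε) with ha_def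
  set b : ℝ := κ ^ (3 / 2 - ε) with hb_def
  set d : ℝ := κ ^ (3 / 2 + ε) with hd_def
  have ha : 0 < a := Real.rpow_pos_of_pos hk0 _
  have hb : 0 < b := Real.rpow_pos_of_pos hk0 _
  have hd : 0 < d := Real.rpow_pos_of_pos hk0 _
  have hκ3 : κ ^ ((3:ℝ)) = κ ^ (3:ℕ) := by
    rw [← Real.rpow_natCast κ 3]; norm_num
  have hκ2 : κ ^ ((2:ℝ)) = κ ^ (2:ℕ) := by
    rw [← Real.rpow_natCast κ 2]; norm_num
  have hbd : b * d = κ ^ (3:ℕ) := by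
    rw [hb_def, hd_def, ← Real.rpow_add hk0, ← hκ3]
    norm_num
  have hb2le : b ^ 2 ≤ κ ^ (3:ℕ) := by
    rw [hb_def, sq, ← Real.rpow_add hk0, ← hκ3]
    exact Real.rpow_le_rpow_of_exponent_le hκ1 (by linarith)
  have hbled : b ≤ d :=
    Real.rpow_le_rpow_of_exponent_le hκ1 (by linarith)
  -- unfold the quadratic form
  simp only [dotProduct, Matrix.mulVec, Fin.sum_univ_three, Matrix.of_apply,
    Matrix.cons_val', Matrix.cons_val_zero, Matrix.cons_val_one, Matrix.head_cons,
    Matrix.empty_val', Matrix.cons_val_fin_one, Matrix.cons_val_two,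
    Matrix.tail_cons, Matrix.head_fin_const, ← hx, ← hy, ← hz, ← ha_def, ← hb_def, ← hd_def]
  clear_value x y z a b d m
  -- the five AM-GM squares
  have hT1 : 0 ≤ ((4 - 3*m) * b) * x ^ 2 + (-(4 * b * (2 - 2*α))) * (x * z)
      + ((4 - 3*m) * b) * z ^ 2 := by
    apply quad_aux _ _ _ _ _ (by nlinarith)
    have h1 : (2 - 2*α) ^ 2 ≤ (2 - 2*m) ^ 2 := by nlinarith only [hmα, hm2α, hm0, hm1]
    have h2 : 16 * (2 - 2*α) ^ 2 ≤ 4 * (4 - 3*m) ^ 2 := by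
      nlinarith only [h1, mul_nonneg hm0.le (by linarith : (0:ℝ) ≤ 16 - 14*m)]
    nlinarith only [mul_le_mul_of_nonneg_right h2 (sq_nonneg b)]
  have hT2 : 0 ≤ (m * b) * x ^ 2 + (4 * b * (6 - 2*α)) * (x * (y + z))
      + (144 * b / m) * (y + z) ^ 2 := by
    apply quad_aux _ _ _ _ _ (mul_pos hm0 hb)
    have h1 : 16 * (6 - 2*α) ^ 2 ≤ 576 := by nlinarith only [hα0, hα2]
    have h2 : 4 * (m * b) * (144 * b / m) = 576 * b ^ 2 := by
      field_simp; ring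
    rw [h2]
    nlinarith only [mul_le_mul_of_nonneg_right h1 (sq_nonneg b)]
  have hT3 : 0 ≤ (m * b) * z ^ 2 + (8 * b) * (z * (y + z)) + (16 * b / m) * (y + z) ^ 2 := by
    apply quad_aux _ _ _ _ _ (mul_pos hm0 hb)
    have h2 : 4 * (m * b) * (16 * b / m) = 64 * b ^ 2 := by
      field_simp; ring
    rw [h2]; nlinarith only [sq_nonneg b]
  have hm2κ : 256 ≤ m ^ 2 * κ := by
    nlinarith only [hm4κ, hm1, hm0, hκ1, pow_le_one₀ hm0.le hm1 (n := 2), pow_pos hm0 2,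
      pow_pos hm0 4, mul_le_one₀ (pow_le_one₀ hm0.le hm1 (n := 2)) (by positivity)
        (pow_le_one₀ hm0.le hm1 (n := 2))]
  have hT4 : 0 ≤ (m * b) * x ^ 2 + (8 * κ) * (x * z) + (m * d) * z ^ 2 := by
    apply quad_aux _ _ _ _ _ (mul_pos hm0 hb)
    have h1 : 4 * (m * b) * (m * d) = 4 * m ^ 2 * κ ^ (3:ℕ) := by
      rw [show (4:ℝ) * (m * b) * (m * d) = 4 * m ^ 2 * (b * d) by ring, hbd]
    rw [h1]
    nlinarith only [mul_nonneg (by linarith : (0:ℝ) ≤ m ^ 2 * κ - 256) (sq_nonneg κ), hk0]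
  have hmd : 16 * κ ≤ m * d := by
    have h1 : (m * d) ^ 2 * b ^ 2 = m ^ 2 * (κ ^ (3:ℕ)) ^ 2 := by
      rw [← hbd]; ring
    have h2 : 256 * κ ^ 2 ≤ (m * d) ^ 2 := by
      have h3 : m ^ 2 * (κ ^ (3:ℕ)) ^ 2 ≤ (m * d) ^ 2 * κ ^ (3:ℕ) := by
        calc m ^ 2 * (κ ^ (3:ℕ)) ^ 2 = (m * d) ^ 2 * b ^ 2 := h1.symm
          _ ≤ (m * d) ^ 2 * κ ^ (3:ℕ) := mul_le_mul_of_nonneg_left hb2le (by positivity)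
      have h4 : 256 * κ ^ 2 * κ ^ (3:ℕ) ≤ m ^ 2 * (κ ^ (3:ℕ)) ^ 2 := by
        nlinarith only [mul_nonneg (by linarith : (0:ℝ) ≤ m ^ 2 * κ - 256)
          (mul_nonneg (sq_nonneg κ) (pow_pos hk0 3).le)]
      have h6 : (0:ℝ) < κ ^ (3:ℕ) := pow_pos hk0 3
      exact le_of_mul_le_mul_right (le_trans h4 h3) h6
    nlinarith only [h2, mul_pos hm0 hd, hk0]
  have hT5 : 0 ≤ (m * d) * z ^ 2 + (8 * κ) * (z * (y + z)) + κ * (y + z) ^ 2 := by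
    apply quad_aux _ _ _ _ _ (mul_pos hm0 hd)
    nlinarith only [mul_le_mul_of_nonneg_right hmd hk0.le]
  have h160 : 160 * b ≤ 3 * m ^ 2 * κ ^ 2 := by
    have h2 : (160 * b) ^ 2 ≤ (3 * m ^ 2 * κ ^ 2) ^ 2 := by
      have h4 : 54000 * κ ^ (3:ℕ) ≤ 9 * (m ^ 4 * κ) * κ ^ (3:ℕ) := by
        nlinarith only [mul_nonneg (by linarith : (0:ℝ) ≤ m ^ 4 * κ - 6000) (pow_pos hk0 3).le]
      nlinarith only [h4, hb2le, pow_pos hk0 3]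
    nlinarith only [h2, hb, mul_pos (mul_pos (by norm_num : (0:ℝ) < 3) (pow_pos hm0 2)) (pow_pos hk0 2)]
  have hRw : 0 ≤ (4 * (2 - α) * κ ^ 2 + 4 * b - 160 * b / m - κ) * (y + z) ^ 2 := by
    apply mul_nonneg _ (sq_nonneg _)
    have h1 : 160 * b / m ≤ 3 * m * κ ^ 2 := by
      rw [div_le_iff₀ hm0]
      nlinarith only [h160, hm0, hm1, hκ1, hk0]
    have hmκ1 : 1 ≤ m * κ := by nlinarith only [hm2κ, hm0, hm1, hκ1, hk0, mul_nonneg (mul_nonneg (by linarith : (0:ℝ) ≤ 1 - m) hm0.le) hk0.le]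
    have h2 : κ ≤ m * κ ^ 2 := by nlinarith only [mul_le_mul_of_nonneg_right hmκ1 hk0.le]
    nlinarith only [h1, h2, hb, mul_le_mul_of_nonneg_right hm2α (sq_nonneg κ), hm0, hmα, hα0]
  have hRx : 0 ≤ m * b * x ^ 2 := by positivity
  have hRz : 0 ≤ (8 - 2*m) * (d - b) * z ^ 2 :=
    mul_nonneg (mul_nonneg (by linarith) (by linarith)) (sq_nonneg _)
  have hP0a : 0 ≤ α * a * (x + (α - 1) * y) ^ 2 :=
    mul_nonneg (mul_nonneg hα0.le ha.le) (sq_nonneg _)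
  have hP0b : 0 ≤ α ^ 2 * (2 - α) * a * y ^ 2 :=
    mul_nonneg (mul_nonneg (mul_nonneg (sq_nonneg α) (by linarith)) ha.le) (sq_nonneg _)
  have key :
      x * ((α * a + 4 * b) * x + (α ^ 2 * a - α * a + 12 * b - 4 * α * b) * y
          + (4 * κ + 8 * b) * z) +
        y * ((α ^ 2 * a - α * a + 12 * b - 4 * α * b) * x
          + (8 * κ ^ 2 - 4 * α * κ ^ 2 + α * a + 4 * b) * y
          + (4 * κ + 8 * κ ^ 2 - 4 * α * κ ^ 2 + 8 * b) * z) +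
      z * ((4 * κ + 8 * b) * x + (4 * κ + 8 * κ ^ 2 - 4 * α * κ ^ 2 + 8 * b) * y
          + (8 * κ + 8 * κ ^ 2 - 4 * α * κ ^ 2 + 8 * b + 8 * d) * z)
      = ((4 - 3 * m) * b * x ^ 2 + -(4 * b * (2 - 2 * α)) * (x * z) + (4 - 3 * m) * b * z ^ 2)
      + (m * b * x ^ 2 + 4 * b * (6 - 2 * α) * (x * (y + z)) + 144 * b / m * (y + z) ^ 2)
      + (m * b * z ^ 2 + 8 * b * (z * (y + z)) + 16 * b / m * (y + z) ^ 2)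
      + (m * b * x ^ 2 + 8 * κ * (x * z) + m * d * z ^ 2)
      + (m * d * z ^ 2 + 8 * κ * (z * (y + z)) + κ * (y + z) ^ 2)
      + ((4 * (2 - α) * κ ^ 2 + 4 * b - 160 * b / m - κ) * (y + z) ^ 2)
      + (m * b * x ^ 2)
      + ((8 - 2 * m) * (d - b) * z ^ 2)
      + (α * a * (x + (α - 1) * y) ^ 2)
      + (α ^ 2 * (2 - α) * a * y ^ 2) := by
    field_simp
    ring
  rw [key]
  exact add_nonneg (add_nonneg (add_nonneg (add_nonneg (add_nonneg (add_nonneg (add_nonneg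
    (add_nonneg (add_nonneg hT1 hT2) hT3) hT4) hT5) hRw) hRx) hRz) hP0a) hP0b
end

section
/- Fix α ∈ (0,2) and ε < 0. Then there exists κ₀ ≥ 1 such that for all κ ≥ κ₀, the symmetric 3×3 matrix M with entries M₁₁ = 8 κ^{3/2−ε} − 4 κ^{3/2+ε} + α κ^{1+2ε}, M₁₂ = 8 κ^{3/2−ε} + 4 κ^{3/2+ε} − 4α κ^{3/2+ε} − α κ^{1+2ε} + α² κ^{1+2ε}, M₁₃ = 4κ + 8 κ^{3/2−ε}, M₂₂ = 8κ² − 4ακ² + 8 κ^{3/2−ε} − 4 κ^{3/2+ε} + α κ^{1+2ε}, M₂₃ = 4κ + 8κ² − 4ακ² + 8 κ^{3/2−ε}, and M₃₃ = 8κ + 8κ² − 4ακ² + 8 κ^{3/2−ε} + 8 κ^{3/2+ε} is positive semidefinite. -/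
set_option maxHeartbeats 1000000


open scoped Matrix

private lemma master (α a b d k S T z : ℝ) (hα0 : 0 < α) (hα2 : α < 2)
    (hd : 0 ≤ d) (hdb : d ≤ b)
    (hba : 100 * b ≤ a) (hbk : 100 * b ≤ (2 - α) * k ^ 2) (hab : 4 * k ^ 2 ≤ a * b) :
    0 ≤ 8*a*S^2 + (8-4*α)*k^2*T^2 + 8*k*z*S + 8*b*z^2
       - (4*b - α*d)*(α/2*(S-z)^2 + (2-α)/2*(S-2*T+z)^2) := by
  have hb : 0 ≤ b := le_trans hd hdb
  have ha : 0 ≤ a := by nlinarith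
  have hα2' : (0:ℝ) ≤ 2 - α := by linarith
  have hc2 : 4*b - α*d ≤ 4*b := by nlinarith
  have hA : (S-z)^2 ≤ 3*S^2 + 3/2*z^2 := by nlinarith [sq_nonneg (2*S + z)]
  have hB : (S-2*T+z)^2 ≤ 6*S^2 + 24*T^2 + 3/2*z^2 := by
    nlinarith [sq_nonneg (2*(S-2*T) - z), sq_nonneg (S + 2*T)]
  have hq : (4*b - α*d)*(α/2*(S-z)^2 + (2-α)/2*(S-2*T+z)^2)
      ≤ 24*b*S^2 + 48*(2-α)*b*T^2 + 6*b*z^2 := by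
    have hq0 : 0 ≤ α/2*(S-z)^2 + (2-α)/2*(S-2*T+z)^2 := by
      have := sq_nonneg (S-z); have := sq_nonneg (S-2*T+z); nlinarith
    calc (4*b - α*d)*(α/2*(S-z)^2 + (2-α)/2*(S-2*T+z)^2)
        ≤ 4*b*(α/2*(S-z)^2 + (2-α)/2*(S-2*T+z)^2) :=
          mul_le_mul_of_nonneg_right hc2 hq0
      _ ≤ 4*b*(α/2*(3*S^2 + 3/2*z^2) + (2-α)/2*(6*S^2 + 24*T^2 + 3/2*z^2)) := by
          have h1 := mul_le_mul_of_nonneg_left hA (by linarith : (0:ℝ) ≤ α/2)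
          have h2 := mul_le_mul_of_nonneg_left hB (by linarith : (0:ℝ) ≤ (2-α)/2)
          have : α/2*(S-z)^2 + (2-α)/2*(S-2*T+z)^2
              ≤ α/2*(3*S^2 + 3/2*z^2) + (2-α)/2*(6*S^2 + 24*T^2 + 3/2*z^2) := by linarith
          exact mul_le_mul_of_nonneg_left this (by linarith : (0:ℝ) ≤ 4*b)
      _ ≤ 24*b*S^2 + 48*(2-α)*b*T^2 + 6*b*z^2 := by
          nlinarith [mul_nonneg (mul_nonneg hα0.le hb) (sq_nonneg S)]
  have hTterm : 48*(2-α)*b*T^2 ≤ (8-4*α)*k^2*T^2 := by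
    have h : 48*(2-α)*b ≤ (8-4*α)*k^2 := by nlinarith [mul_nonneg hα0.le hb]
    exact mul_le_mul_of_nonneg_right h (sq_nonneg T)
  have h16 : 16*k^2 ≤ 2*b*(8*a-24*b) := by
    have := mul_le_mul_of_nonneg_left hba hb
    nlinarith
  have hfin : 0 ≤ (8*a-24*b)*S^2 + 8*k*z*S + 2*b*z^2 := by
    have hc : 0 ≤ 8*a - 24*b := by linarith
    rcases eq_or_lt_of_le hc with h0 | hpos
    · have hb0 : b = 0 := le_antisymm (by linarith) hb
      have ha0 : a = 0 := by linarith
      have hk2 : k ^ 2 ≤ 0 := by rw [ha0, hb0] at hab; linarith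
      have hk0 : k = 0 := pow_eq_zero_iff two_ne_zero |>.mp (le_antisymm hk2 (sq_nonneg k))
      rw [ha0, hb0, hk0]; norm_num
    · nlinarith [sq_nonneg ((8*a-24*b)*S + 4*k*z),
        mul_nonneg (by linarith : (0:ℝ) ≤ 2*b*(8*a-24*b) - 16*k^2) (sq_nonneg z)]
  linarith [hq, hTterm, hfin]

/-- the key matrix computation in the proof of Theorem 2, case `ε < 0`.
For fixed `α ∈ (0, 2)` and `ε < 0`, the symmetric `3 × 3` matrix `M` with the listed
entries is positive semidefinite for all sufficiently large `κ`. -/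
theorem stmt12 (α ε : ℝ) (hα0 : 0 < α) (hα2 : α < 2) (hε : ε < 0) :
    ∃ κ₀ : ℝ, 1 ≤ κ₀ ∧ ∀ κ : ℝ, κ₀ ≤ κ →
      ∀ v : Fin 3 → ℝ, 0 ≤ v ⬝ᵥ
        ((!![8 * κ ^ (3 / 2 - ε) - 4 * κ ^ (3 / 2 + ε) + α * κ ^ (1 + 2 * ε),
            8 * κ ^ (3 / 2 - ε) + 4 * κ ^ (3 / 2 + ε) - 4 * α * κ ^ (3 / 2 + ε)
              - α * κ ^ (1 + 2 * ε) + α ^ 2 * κ ^ (1 + 2 * ε),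
            4 * κ + 8 * κ ^ (3 / 2 - ε);
          8 * κ ^ (3 / 2 - ε) + 4 * κ ^ (3 / 2 + ε) - 4 * α * κ ^ (3 / 2 + ε)
              - α * κ ^ (1 + 2 * ε) + α ^ 2 * κ ^ (1 + 2 * ε),
            8 * κ ^ 2 - 4 * α * κ ^ 2 + 8 * κ ^ (3 / 2 - ε) - 4 * κ ^ (3 / 2 + ε)
              + α * κ ^ (1 + 2 * ε),
            4 * κ + 8 * κ ^ 2 - 4 * α * κ ^ 2 + 8 * κ ^ (3 / 2 - ε);
          4 * κ + 8 * κ ^ (3 / 2 - ε),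
            4 * κ + 8 * κ ^ 2 - 4 * α * κ ^ 2 + 8 * κ ^ (3 / 2 - ε),
            8 * κ + 8 * κ ^ 2 - 4 * α * κ ^ 2 + 8 * κ ^ (3 / 2 - ε) + 8 * κ ^ (3 / 2 + ε)]
          : Matrix (Fin 3) (Fin 3) ℝ) *ᵥ v) := by
  refine ⟨max (max 4 ((100/(2-α))^2)) ((100:ℝ) ^ (-(2*ε))⁻¹), ?_, ?_⟩
  · exact le_trans (by norm_num) (le_max_of_le_left (le_max_left _ _))
  intro κ hκ v
  have hκ4 : (4:ℝ) ≤ κ := le_trans (le_max_of_le_left (le_max_left _ _)) hκ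
  have hκ1 : (1:ℝ) ≤ κ := by linarith
  have hκ0 : (0:ℝ) < κ := by linarith
  have h2α : (0:ℝ) < 2 - α := by linarith
  -- the four rpow quantities
  have hd : 0 ≤ κ ^ (1 + 2*ε) := Real.rpow_nonneg hκ0.le _
  have hdb : κ ^ (1 + 2*ε) ≤ κ ^ (3/2 + ε) :=
    Real.rpow_le_rpow_of_exponent_le hκ1 (by linarith)
  -- hba : 100 * κ^(3/2+ε) ≤ κ^(3/2-ε)
  have hmε : (0:ℝ) < -(2*ε) := by linarith
  have hbig : (100:ℝ) ≤ κ ^ (-(2*ε)) := by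
    have h1 : ((100:ℝ) ^ (-(2*ε))⁻¹) ^ (-(2*ε)) = 100 := by
      rw [← Real.rpow_mul (by norm_num : (0:ℝ) ≤ 100), inv_mul_cancel₀ hmε.ne',
        Real.rpow_one]
    calc (100:ℝ) = ((100:ℝ) ^ (-(2*ε))⁻¹) ^ (-(2*ε)) := h1.symm
      _ ≤ κ ^ (-(2*ε)) := Real.rpow_le_rpow (Real.rpow_nonneg (by norm_num) _)
          (le_trans (le_max_right _ _) hκ) hmε.le
  have hba : 100 * κ ^ (3/2 + ε) ≤ κ ^ (3/2 - ε) := by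
    have : κ ^ (3/2 - ε) = κ ^ (3/2 + ε) * κ ^ (-(2*ε)) := by
      rw [← Real.rpow_add hκ0]; ring_nf
    rw [this]
    have hb0 : 0 ≤ κ ^ (3/2 + ε) := Real.rpow_nonneg hκ0.le _
    nlinarith [mul_le_mul_of_nonneg_left hbig hb0]
  -- hbk : 100 * κ^(3/2+ε) ≤ (2-α) * κ^2
  have hsqrt : 100/(2-α) ≤ κ ^ ((1:ℝ)/2) := by
    have hx : 0 ≤ κ ^ ((1:ℝ)/2) := Real.rpow_nonneg hκ0.le _
    have hsq : (κ ^ ((1:ℝ)/2)) ^ 2 = κ := by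
      rw [← Real.rpow_natCast (κ ^ ((1:ℝ)/2)) 2, ← Real.rpow_mul hκ0.le]
      norm_num
    have hr : (100/(2-α))^2 ≤ κ := le_trans (le_trans (le_max_right _ _) (le_max_left _ _)) hκ
    nlinarith [sq_nonneg (κ ^ ((1:ℝ)/2) - 100/(2-α)), sq_nonneg (κ ^ ((1:ℝ)/2) + 100/(2-α))]
  have hbk : 100 * κ ^ (3/2 + ε) ≤ (2-α) * κ ^ 2 := by
    have hmono : κ ^ ((1:ℝ)/2) ≤ κ ^ ((1:ℝ)/2 - ε) :=
      Real.rpow_le_rpow_of_exponent_le hκ1 (by linarith)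
    have h100 : 100 ≤ (2-α) * κ ^ ((1:ℝ)/2 - ε) := by
      have := mul_le_mul_of_nonneg_left (le_trans hsqrt hmono) h2α.le
      calc (100:ℝ) = (2-α) * (100/(2-α)) := by field_simp
        _ ≤ (2-α) * κ ^ ((1:ℝ)/2 - ε) := this
    have hdecomp : (κ:ℝ) ^ 2 = κ ^ (3/2 + ε) * κ ^ ((1:ℝ)/2 - ε) := by
      rw [← Real.rpow_add hκ0, ← Real.rpow_natCast κ 2]
      norm_num
    rw [hdecomp]
    have hb0 : 0 ≤ κ ^ (3/2 + ε) := Real.rpow_nonneg hκ0.le _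
    nlinarith [mul_le_mul_of_nonneg_left h100 hb0]
  -- hab : 4 * κ^2 ≤ κ^(3/2-ε) * κ^(3/2+ε)
  have hab : 4 * κ ^ 2 ≤ κ ^ (3/2 - ε) * κ ^ (3/2 + ε) := by
    have : κ ^ (3/2 - ε) * κ ^ (3/2 + ε) = κ ^ (3:ℝ) := by
      rw [← Real.rpow_add hκ0]; norm_num
    rw [this, show (3:ℝ) = ((3:ℕ):ℝ) by norm_num, Real.rpow_natCast]
    nlinarith [sq_nonneg κ]
  have h := master α (κ ^ (3/2 - ε)) (κ ^ (3/2 + ε)) (κ ^ (1 + 2*ε)) κ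
      (v 0 + v 1 + v 2) (v 1 + v 2) (v 2) hα0 hα2 hd hdb hba hbk hab
  simp [Matrix.mulVec, dotProduct, Fin.sum_univ_three]
  nlinarith [h]
end

section
/- Let Q be a symmetric positive definite d×d matrix, let δ ≥ 0, ρ > 0, and α ∈ ℝ, and let sequences (x_k), (z_k), (u_k) in ℝ^d satisfy x_{k+1} = ρ(Q+ρI)⁻¹(z_k − u_k), z_{k+1} = (ρ/(δ+ρ))·(α x_{k+1} + (1−α) z_k + u_k), and u_{k+1} = u_k + α x_{k+1} + (1−α) z_k − z_{k+1}. If u₀ = (δ/ρ) z₀, then for all k ≥ 0: u_k = (δ/ρ) z_k and z_{k+1} = T z_k, where T = (αρ(ρ−δ)/(ρ+δ))·(Q+ρI)⁻¹ + ((ρ − αρ + δ)/(ρ+δ))·I. -/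
open scoped Matrix

/-- the reduction of the lower-bound construction to the matrix `T`.
For the quadratic instance `f(x) = (1/2) xᵀ Q x`, `g(z) = (δ/2) ‖z‖²`, `A = I`, `B = -I`,
`c = 0`, the over-relaxed ADMM recursions, started with `u₀ = (δ/ρ) z₀`, satisfy
`u_k = (δ/ρ) z_k` and `z_{k+1} = T z_k` for all `k`, where
`T = (αρ(ρ-δ)/(ρ+δ)) (Q + ρI)⁻¹ + ((ρ - αρ + δ)/(ρ+δ)) I`. -/
theorem stmt13 {d : ℕ} (Q : Matrix (Fin d) (Fin d) ℝ) (hQ : Q.PosDef)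
    (δ ρ α : ℝ) (hδ : 0 ≤ δ) (hρ : 0 < ρ)
    (x z u : ℕ → Fin d → ℝ)
    (hx : ∀ k, x (k + 1) = ρ • ((Q + ρ • (1 : Matrix (Fin d) (Fin d) ℝ))⁻¹ *ᵥ (z k - u k)))
    (hz : ∀ k, z (k + 1) = (ρ / (δ + ρ)) • (α • x (k + 1) + (1 - α) • z k + u k))
    (hu : ∀ k, u (k + 1) = u k + α • x (k + 1) + (1 - α) • z k - z (k + 1))
    (h0 : u 0 = (δ / ρ) • z 0) :
    ∀ k : ℕ, u k = (δ / ρ) • z k ∧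
      z (k + 1) = ((α * ρ * (ρ - δ) / (ρ + δ)) •
          (Q + ρ • (1 : Matrix (Fin d) (Fin d) ℝ))⁻¹ +
        ((ρ - α * ρ + δ) / (ρ + δ)) • (1 : Matrix (Fin d) (Fin d) ℝ)) *ᵥ z k := by
  have hρ' : ρ ≠ 0 := hρ.ne'
  have hδρ : δ + ρ ≠ 0 := by positivity
  set M := (Q + ρ • (1 : Matrix (Fin d) (Fin d) ℝ))⁻¹ with hM
  have keyu : ∀ k, u (k + 1) = (δ / ρ) • z (k + 1) := by
    intro k
    rw [hu k, hz k]
    match_scalars <;> field_simp <;> ring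
  have keyz : ∀ k, u k = (δ / ρ) • z k →
      z (k + 1) = ((α * ρ * (ρ - δ) / (ρ + δ)) • M +
        ((ρ - α * ρ + δ) / (ρ + δ)) • (1 : Matrix (Fin d) (Fin d) ℝ)) *ᵥ z k := by
    intro k hk
    have hsub : z k - u k = ((ρ - δ) / ρ) • z k := by
      rw [hk]; match_scalars; field_simp
    rw [hz k, hx k, hsub, hk, Matrix.mulVec_smul, Matrix.add_mulVec,
      Matrix.smul_mulVec, Matrix.smul_mulVec, Matrix.one_mulVec]
    match_scalars <;> field_simp <;> ring
  intro k
  induction k with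
  | zero => exact ⟨h0, keyz 0 h0⟩
  | succ n ih => exact ⟨keyu n, keyz (n + 1) (keyu n)⟩
end

section
/- Fix 0 < m ≤ L with κ = L/m, fix ε ≥ 0, α > 0, and set ρ = (mL)^{1/2} κ^{ε}. Let Q be a symmetric positive definite matrix with largest eigenvalue L and smallest eigenvalue m, let v be an eigenvector of Q with eigenvalue m, and let f(x) = (1/2)xᵀQx, g(z) = 0, A = I, B = −I, c = 0. Then the over-relaxed ADMM iterates with parameters ρ and α, initialized with z₀ = v and u₀ = 0, satisfy z_k = (1 − α/(1 + κ^{0.5+ε}))^k · v for all k ≥ 0. -/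
open scoped Matrix

/-- lower-bound construction of Theorem 3, case `ε ≥ 0`.
Let `0 < m ≤ L`, `κ = L/m`, `ε ≥ 0`, `α > 0`, `ρ = (mL)^(1/2) κ^ε`.  Let `Q` be symmetric
positive definite with smallest eigenvalue `m` and largest eigenvalue `L` (so
`m ‖w‖² ≤ wᵀQw ≤ L ‖w‖²`), and let `v` be an eigenvector of `Q` with eigenvalue `m`.
For `f(x) = (1/2) xᵀQx`, `g = 0`, `A = I`, `B = -I`, `c = 0`, the over-relaxed ADMM
iterates (which for this instance read `x_{k+1} = ρ(Q+ρI)⁻¹(z_k - u_k)`,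
`z_{k+1} = α x_{k+1} + (1-α) z_k + u_k`, `u_{k+1} = u_k + α x_{k+1} + (1-α) z_k - z_{k+1}`)
started from `z₀ = v`, `u₀ = 0` satisfy `z_k = (1 - α/(1 + κ^(0.5+ε)))^k • v`. -/
theorem stmt15 {d : ℕ} (m L ε α ρ : ℝ) (hm : 0 < m) (hmL : m ≤ L)
    (hε : 0 ≤ ε) (hα : 0 < α)
    (hρ : ρ = Real.sqrt (m * L) * (L / m) ^ ε)
    (Q : Matrix (Fin d) (Fin d) ℝ) (hQ : Q.PosDef)
    (hQlow : ∀ w : Fin d → ℝ, m * (w ⬝ᵥ w) ≤ w ⬝ᵥ (Q *ᵥ w))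
    (hQhigh : ∀ w : Fin d → ℝ, w ⬝ᵥ (Q *ᵥ w) ≤ L * (w ⬝ᵥ w))
    (v : Fin d → ℝ) (hv : v ≠ 0) (hev : Q *ᵥ v = m • v)
    (x z u : ℕ → Fin d → ℝ)
    (hx : ∀ k, x (k + 1) = ρ • ((Q + ρ • (1 : Matrix (Fin d) (Fin d) ℝ))⁻¹ *ᵥ (z k - u k)))
    (hz : ∀ k, z (k + 1) = α • x (k + 1) + (1 - α) • z k + u k)
    (hu : ∀ k, u (k + 1) = u k + α • x (k + 1) + (1 - α) • z k - z (k + 1))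
    (hz0 : z 0 = v) (hu0 : u 0 = 0) :
    ∀ k : ℕ, z k = (1 - α / (1 + (L / m) ^ (0.5 + ε))) ^ k • v := by
  have hL : 0 < L := hm.trans_le hmL
  have hκ : 0 < L / m := div_pos hL hm
  have hρpos : 0 < ρ := by
    rw [hρ]
    have : 0 < Real.sqrt (m * L) := Real.sqrt_pos.mpr (by positivity)
    positivity
  set s : ℝ := (L / m) ^ ((0.5 : ℝ) + ε) with hs
  have hspos : 0 < s := Real.rpow_pos_of_pos hκ _
  -- key scalar identity : m * s = ρ
  have hkey : m * s = ρ := by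
    rw [hs, hρ, Real.rpow_add hκ, show (0.5 : ℝ) = 1/2 by norm_num, ← Real.sqrt_eq_rpow,
      Real.sqrt_div hL.le m, Real.sqrt_mul hm.le]
    have hsm : (0:ℝ) < Real.sqrt m := Real.sqrt_pos.mpr hm
    have hmm : Real.sqrt m * Real.sqrt m = m := Real.mul_self_sqrt hm.le
    field_simp
    linear_combination (-1) * hmm
  -- u is identically zero
  have huz : ∀ k, u k = 0 := by
    intro k
    induction k with
    | zero => exact hu0
    | succ k ih => rw [hu k, hz k, ih]; abel
  -- the matrix M = Q + ρ I
  set M : Matrix (Fin d) (Fin d) ℝ := Q + ρ • (1 : Matrix (Fin d) (Fin d) ℝ) with hM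
  have hMpd : M.PosDef := by
    refine hQ.add_posSemidef (Matrix.PosSemidef.of_dotProduct_mulVec_nonneg ?_ ?_)
    · simp [Matrix.IsHermitian]
    · intro w
      rw [Matrix.smul_mulVec, Matrix.one_mulVec, dotProduct_smul]
      exact smul_nonneg hρpos.le (dotProduct_star_self_nonneg w)
  have hMv : M *ᵥ v = (m + ρ) • v := by
    rw [hM, Matrix.add_mulVec, Matrix.smul_mulVec, Matrix.one_mulVec, hev, add_smul]
  have hmρ : m + ρ ≠ 0 := by positivity
  have hMinv : M⁻¹ *ᵥ v = (m + ρ)⁻¹ • v := by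
    have h1 : M⁻¹ * M = 1 := Matrix.nonsing_inv_mul M hMpd.det_pos.ne'.isUnit
    have h2 : M⁻¹ *ᵥ (M *ᵥ v) = v := by
      rw [Matrix.mulVec_mulVec, h1, Matrix.one_mulVec]
    rw [hMv, Matrix.mulVec_smul] at h2
    calc M⁻¹ *ᵥ v = (m + ρ)⁻¹ • ((m + ρ) • (M⁻¹ *ᵥ v)) := by
          rw [smul_smul, inv_mul_cancel₀ hmρ, one_smul]
      _ = (m + ρ)⁻¹ • v := by rw [h2]
  -- the contraction factor
  have hr : 1 - α / (1 + s) = α * (ρ * (m + ρ)⁻¹) + (1 - α) := by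
    have h1s : (1 : ℝ) + s ≠ 0 := by positivity
    rw [← hkey] at hmρ ⊢
    field_simp
    ring
  intro k
  induction k with
  | zero => simpa using hz0
  | succ k ih =>
    rw [hz k, hx k, huz k, sub_zero, ih, Matrix.mulVec_smul, hMinv]
    rw [smul_smul, smul_smul, smul_smul, smul_smul, add_zero, ← add_smul]
    congr 1
    rw [pow_succ, hr]
    ring
end

section
/- Fix 0 < m ≤ L with κ = L/m, fix ε < 0, α > 0, and set ρ = (mL)^{1/2} κ^{ε} and δ = L. Let Q be a symmetric positive definite matrix with largest eigenvalue L and smallest eigenvalue m, let v be an eigenvector of Q with eigenvalue L, and let f(x) = (1/2)xᵀQx, g(z) = (δ/2)‖z‖², A = I, B = −I, c = 0. Then the over-relaxed ADMM iterates with parameters ρ and α, initialized with z₀ = v and u₀ = (δ/ρ) v, satisfy z_k = (1 − 2α/((1 + κ^{0.5−ε})(κ^{−0.5+ε} + 1)))^k · v for all k ≥ 0, and the rate satisfies 1 − 2α/((1 + κ^{0.5−ε})(κ^{−0.5+ε} + 1)) ≥ 1 − 2α/(1 + κ^{0.5−ε}). -/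
open scoped Matrix

/-- lower-bound construction of Theorem 3, case `ε < 0`.
Let `0 < m ≤ L`, `κ = L/m`, `ε < 0`, `α > 0`, `ρ = (mL)^(1/2) κ^ε`, `δ = L`.  Let `Q` be
symmetric positive definite with smallest eigenvalue `m` and largest eigenvalue `L`, and
let `v` be an eigenvector of `Q` with eigenvalue `L`.  For `f(x) = (1/2) xᵀQx`,
`g(z) = (δ/2)‖z‖²`, `A = I`, `B = -I`, `c = 0`, the over-relaxed ADMM iterates
(`x_{k+1} = ρ(Q+ρI)⁻¹(z_k - u_k)`, `z_{k+1} = (ρ/(δ+ρ))(α x_{k+1} + (1-α) z_k + u_k)`,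
`u_{k+1} = u_k + α x_{k+1} + (1-α) z_k - z_{k+1}`) started from `z₀ = v`, `u₀ = (δ/ρ) v`
satisfy `z_k = (1 - 2α/((1 + κ^(0.5-ε))(κ^(-0.5+ε) + 1)))^k • v`, and moreover
`1 - 2α/((1 + κ^(0.5-ε))(κ^(-0.5+ε) + 1)) ≥ 1 - 2α/(1 + κ^(0.5-ε))`. -/
theorem stmt16 {d : ℕ} (m L ε α ρ : ℝ) (hm : 0 < m) (hmL : m ≤ L)
    (hε : ε < 0) (hα : 0 < α)
    (hρ : ρ = Real.sqrt (m * L) * (L / m) ^ ε)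
    (Q : Matrix (Fin d) (Fin d) ℝ) (hQ : Q.PosDef)
    (hQlow : ∀ w : Fin d → ℝ, m * (w ⬝ᵥ w) ≤ w ⬝ᵥ (Q *ᵥ w))
    (hQhigh : ∀ w : Fin d → ℝ, w ⬝ᵥ (Q *ᵥ w) ≤ L * (w ⬝ᵥ w))
    (v : Fin d → ℝ) (hv : v ≠ 0) (hev : Q *ᵥ v = L • v)
    (x z u : ℕ → Fin d → ℝ)
    (hx : ∀ k, x (k + 1) = ρ • ((Q + ρ • (1 : Matrix (Fin d) (Fin d) ℝ))⁻¹ *ᵥ (z k - u k)))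
    (hz : ∀ k, z (k + 1) = (ρ / (L + ρ)) • (α • x (k + 1) + (1 - α) • z k + u k))
    (hu : ∀ k, u (k + 1) = u k + α • x (k + 1) + (1 - α) • z k - z (k + 1))
    (hz0 : z 0 = v) (hu0 : u 0 = (L / ρ) • v) :
    (∀ k : ℕ, z k =
      (1 - 2 * α / ((1 + (L / m) ^ (0.5 - ε)) * ((L / m) ^ (-0.5 + ε) + 1))) ^ k • v) ∧
    1 - 2 * α / (1 + (L / m) ^ (0.5 - ε)) ≤
      1 - 2 * α / ((1 + (L / m) ^ (0.5 - ε)) * ((L / m) ^ (-0.5 + ε) + 1)) := by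
  have hL : 0 < L := lt_of_lt_of_le hm hmL
  have hκ : 0 < L / m := div_pos hL hm
  have hρpos : 0 < ρ := by
    rw [hρ]
    exact mul_pos (Real.sqrt_pos.mpr (mul_pos hm hL)) (Real.rpow_pos_of_pos hκ ε)
  have hLρpos : 0 < L + ρ := by linarith
  have hLρne : L + ρ ≠ 0 := hLρpos.ne'
  -- key scalar identity : ρ * κ^(0.5-ε) = L
  have hkey : ρ * (L / m) ^ ((0.5 : ℝ) - ε) = L := by
    rw [hρ, mul_assoc, ← Real.rpow_add hκ,
      show ε + ((0.5 : ℝ) - ε) = 1 / 2 by ring,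
      Real.sqrt_eq_rpow, ← Real.mul_rpow (by positivity) hκ.le,
      show m * L * (L / m) = L ^ 2 by field_simp,
      ← Real.rpow_natCast L 2, ← Real.rpow_mul hL.le]
    norm_num
  have hLdρ : L / ρ = (L / m) ^ ((0.5 : ℝ) - ε) := by
    rw [div_eq_iff hρpos.ne', mul_comm]; exact hkey.symm
  have hρdL : ρ / L = (L / m) ^ (-(0.5 : ℝ) + ε) := by
    have h1 : (L / m) ^ (-(0.5 : ℝ) + ε) = ((L / m) ^ ((0.5 : ℝ) - ε))⁻¹ := by
      rw [← Real.rpow_neg hκ.le]; ring_nf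
    rw [h1, ← hLdρ, inv_div]
  set r : ℝ := 1 - 2 * α / ((1 + (L / m) ^ ((0.5 : ℝ) - ε)) * ((L / m) ^ (-(0.5 : ℝ) + ε) + 1))
    with hrdef
  have hden : (1 + (L / m) ^ ((0.5 : ℝ) - ε)) * ((L / m) ^ (-(0.5 : ℝ) + ε) + 1)
      = (L + ρ) ^ 2 / (ρ * L) := by
    rw [← hLdρ, ← hρdL]
    field_simp
    ring
  have hr : r = 1 - 2 * α * ρ * L / (L + ρ) ^ 2 := by
    rw [hrdef, hden, div_div_eq_mul_div]
    ring_nf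
  -- matrix facts
  have hMpd : (Q + ρ • (1 : Matrix (Fin d) (Fin d) ℝ)).PosDef := by
    refine hQ.add ?_
    constructor
    · unfold Matrix.IsHermitian
      simp [Matrix.conjTranspose_smul]
    · intro w hw
      exact (Matrix.PosDef.one.smul hρpos).2 hw
  have hdet : IsUnit (Q + ρ • (1 : Matrix (Fin d) (Fin d) ℝ)).det :=
    isUnit_iff_ne_zero.mpr hMpd.det_pos.ne'
  have hMv : (Q + ρ • (1 : Matrix (Fin d) (Fin d) ℝ)) *ᵥ v = (L + ρ) • v := by
    rw [Matrix.add_mulVec, hev, Matrix.smul_mulVec, Matrix.one_mulVec, add_smul]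
  have hinv : (Q + ρ • (1 : Matrix (Fin d) (Fin d) ℝ))⁻¹ *ᵥ v = (L + ρ)⁻¹ • v := by
    have h1 : (Q + ρ • (1 : Matrix (Fin d) (Fin d) ℝ))⁻¹ *ᵥ
        ((Q + ρ • (1 : Matrix (Fin d) (Fin d) ℝ)) *ᵥ v) = v := by
      rw [Matrix.mulVec_mulVec, Matrix.nonsing_inv_mul _ hdet, Matrix.one_mulVec]
    rw [hMv, Matrix.mulVec_smul] at h1
    exact (eq_inv_smul_iff₀ hLρne).mpr h1
  -- main induction
  have main : ∀ k : ℕ, z k = r ^ k • v ∧ u k = (L / ρ * r ^ k) • v := by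
    intro k
    induction k with
    | zero => simp [hz0, hu0]
    | succ k ih =>
      obtain ⟨ihz, ihu⟩ := ih
      have hxk : x (k + 1) = (ρ * (r ^ k - L / ρ * r ^ k) * (L + ρ)⁻¹) • v := by
        rw [hx, ihz, ihu, ← sub_smul, Matrix.mulVec_smul, hinv, smul_smul, smul_smul]
      have hzk : z (k + 1) = r ^ (k + 1) • v := by
        rw [hz, hxk, ihz, smul_smul, smul_smul, ihu, ← add_smul, ← add_smul, smul_smul]
        congr 1
        rw [pow_succ, hr]
        field_simp
        ring
      refine ⟨hzk, ?_⟩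
      rw [hu, hxk, ihz, ihu, hzk, smul_smul, smul_smul, ← add_smul, ← add_smul, ← sub_smul]
      congr 1
      rw [pow_succ, hr]
      field_simp
      ring
  refine ⟨fun k => (main k).1, ?_⟩
  have hκ1pos : 0 < 1 + (L / m) ^ ((0.5 : ℝ) - ε) := by
    have := Real.rpow_pos_of_pos hκ ((0.5 : ℝ) - ε); linarith
  have hκ2pos : 0 < (L / m) ^ (-(0.5 : ℝ) + ε) := Real.rpow_pos_of_pos hκ _
  have hfr : 2 * α / ((1 + (L / m) ^ ((0.5 : ℝ) - ε)) * ((L / m) ^ (-(0.5 : ℝ) + ε) + 1))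
      ≤ 2 * α / (1 + (L / m) ^ ((0.5 : ℝ) - ε)) := by
    rw [← div_div]
    exact div_le_self (by positivity) (by linarith)
  linarith
end
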